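/- arXiv:2410.05690 — 2 statements merged into one kernel-verified Lean document; each statement's English description precedes it below -/
import Mathlib

section
/- Let Y_n and W_n^R be real random variables on a probability space with W_n^R ≥ 0, let R > 0, and suppose the Freedman-type tail bound holds: for all r > 0 and W > 0, P(Y_n ≥ r and W_n^R ≤ W) ≤ exp(−(r²/2)/(W + R r)). Then for any γ > 0 and any constants α_U ≥ α_L > 0, letting E denote the event {W_n^R ≥ α_L} ∩ {Y_n ≤ α_U}, one has P({W_n^R ≤ γ Y_n} ∩ E) ≤ exp(−α_L/(2eγ(eγ + R)) + ln(ln(γ α_U / α_L) + 1)). -/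
open scoped BigOperators
open Matrix MeasureTheory

namespace LongContext

/-- The ℓ²→ℓ² operator norm (largest singular value) of a real matrix. -/
noncomputable def opNorm {m n : Type*} [Fintype m] [Fintype n] [DecidableEq n]
    (M : Matrix m n ℝ) : ℝ :=
  ‖LinearMap.toContinuousLinearMap (Matrix.toEuclideanLin M)‖

/-- The squared Frobenius norm of a real matrix. -/
noncomputable def frobSq {m n : Type*} [Fintype m] [Fintype n] (M : Matrix m n ℝ) : ℝ :=
  ∑ i, ∑ j, (M i j) ^ 2

/-- The Frobenius norm of a real matrix. -/
noncomputable def frobNorm {m n : Type*} [Fintype m] [Fintype n] (M : Matrix m n ℝ) : ℝ :=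
  Real.sqrt (frobSq M)

/-- The smallest singular value of a square real matrix, characterized as the
infimum of `‖M x‖` over unit vectors `x`. -/
noncomputable def sigmaMin {n : Type*} [Fintype n] [DecidableEq n] (M : Matrix n n ℝ) : ℝ :=
  sInf {r : ℝ | ∃ x : EuclideanSpace ℝ n, ‖x‖ = 1 ∧ r = ‖Matrix.toEuclideanLin M x‖}

/-- A design matrix `A = (A_1, …, A_p)` viewed as a single `d × (p·d)` matrix. -/
def blockRow {d p : ℕ} (A : Fin p → Matrix (Fin d) (Fin d) ℝ) :
    Matrix (Fin d) (Fin p × Fin d) ℝ :=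
  fun i kj => A kj.1 i kj.2

/-- The `Td × Td` block matrix `M_A` with `d × d` blocks `(M_A)^{(i,j)} = A_{i-j}`
for `1 ≤ i - j ≤ p` (with `i, j` the 1-indexed block indices) and `0` otherwise. -/
def MA {d p : ℕ} (T : ℕ) (A : Fin p → Matrix (Fin d) (Fin d) ℝ) :
    Matrix (Fin T × Fin d) (Fin T × Fin d) ℝ :=
  fun ia jb =>
    if h : jb.1.1 < ia.1.1 ∧ ia.1.1 - jb.1.1 ≤ p then
      A ⟨ia.1.1 - jb.1.1 - 1, by omega⟩ ia.2 jb.2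
    else 0

/-- Truncation of a design matrix to context length `p'`:
`A⋆_{p'} = (A_1, …, A_{p'}, 0, …, 0)`. -/
def trunc {d p : ℕ} (p' : ℕ) (A : Fin p → Matrix (Fin d) (Fin d) ℝ) :
    Fin p → Matrix (Fin d) (Fin d) ℝ :=
  fun k => if k.1 < p' then A k else 0

/-- The `(i,j)` block (1-indexed, here 0-indexed by `Fin T`) of size `d × d`
of a `Td × Td` matrix. -/
def Mblock {d T : ℕ} (L : Matrix (Fin T × Fin d) (Fin T × Fin d) ℝ)
    (i j : Fin T) : Matrix (Fin d) (Fin d) ℝ :=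
  fun a b => L (i, a) (j, b)

/-- The autoregressive trajectory `x_t = ∑_{k=1}^p A_k x_{t-k} + ξ_t` for `t ≥ 1`,
with `x_s = 0` for `s ≤ 0`. -/
noncomputable def traj {d p : ℕ} (A : Fin p → Matrix (Fin d) (Fin d) ℝ)
    (xi : ℕ → Fin d → ℝ) : ℕ → Fin d → ℝ
  | 0 => 0
  | (t + 1) => (∑ k : Fin p, (A k).mulVec (traj A xi (t - k.1))) + xi (t + 1)
  termination_by t => t
  decreasing_by exact Nat.lt_succ_of_le (Nat.sub_le _ _)

/-- The empirical square loss
`L(A) = (1/(NT)) ∑_{n=1}^N ∑_{t=p}^T ‖x_t^{(n)} − ∑_{k=1}^p A_k x_{t−k}^{(n)}‖²`. -/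
noncomputable def empLoss {d p : ℕ} (N T : ℕ) (x : Fin N → ℕ → Fin d → ℝ)
    (A : Fin p → Matrix (Fin d) (Fin d) ℝ) : ℝ :=
  (1 / (N * T : ℝ)) * ∑ n : Fin N, ∑ t ∈ Finset.Icc p T,
    ∑ i : Fin d, (x n t i - ∑ k : Fin p, (A k).mulVec (x n (t - (k.1 + 1))) i) ^ 2


/-- Lemma 1 (extension of Freedman's inequality). If `Y` and `W ≥ 0` satisfy
the Freedman-type tail bound `P(Y ≥ r, W ≤ W₀) ≤ exp(−(r²/2)/(W₀ + Rr))` for all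
`r, W₀ > 0`, then for `E = {W ≥ α_L} ∩ {Y ≤ α_U}` with `0 < α_L ≤ α_U` and `γ > 0`:
`P({W ≤ γY} ∩ E) ≤ exp(−α_L/(2eγ(eγ+R)) + ln(ln(γα_U/α_L)+1))`. -/
theorem freedman_extended {Ω : Type*} [MeasurableSpace Ω] (μ : MeasureTheory.Measure Ω)
    [MeasureTheory.IsProbabilityMeasure μ]
    (Y W : Ω → ℝ) (R : ℝ) (hR : 0 < R) (hW : ∀ ω, 0 ≤ W ω)
    (htail : ∀ r W₀ : ℝ, 0 < r → 0 < W₀ →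
      μ {ω | r ≤ Y ω ∧ W ω ≤ W₀} ≤
        ENNReal.ofReal (Real.exp (-(r ^ 2 / 2) / (W₀ + R * r))))
    (γ αL αU : ℝ) (hγ : 0 < γ) (hαL : 0 < αL) (hα : αL ≤ αU) :
    μ ({ω | W ω ≤ γ * Y ω} ∩ ({ω | αL ≤ W ω} ∩ {ω | Y ω ≤ αU})) ≤
      ENNReal.ofReal (Real.exp
        (-(αL / (2 * Real.exp 1 * γ * (Real.exp 1 * γ + R))) +
          Real.log (Real.log (γ * αU / αL) + 1))) := by
  by_cases hcase : αL ≤ γ * αU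
  · -- main case: the peeling argument
    set e := Real.exp 1 with he
    have he1 : 1 < e := by
      rw [he]; linarith [Real.exp_one_gt_d9]
    have heγR : 0 < e * γ + R := by positivity
    have hγαU : (1:ℝ) ≤ γ * αU / αL := (one_le_div hαL).2 hcase
    set L := Real.log (γ * αU / αL) with hL
    have hL0 : 0 ≤ L := Real.log_nonneg hγαU
    set K := ⌊L⌋₊ with hK
    set a := αL / (2 * e * γ * (e * γ + R)) with ha
    set C := Real.exp (-a) with hC
    set r : ℕ → ℝ := fun k => αL * Real.exp k / γ with hr
    have hrpos : ∀ k : ℕ, 0 < r k := by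
      intro k; rw [hr]; positivity
    have hrge : ∀ k : ℕ, αL ≤ γ * r k := by
      intro k
      have h1 : (1:ℝ) ≤ Real.exp k := Real.one_le_exp (Nat.cast_nonneg k)
      have h2 : γ * r k = αL * Real.exp k := by rw [hr]; field_simp
      rw [h2]
      nlinarith
    -- the peeling slices
    have hsub : {ω | W ω ≤ γ * Y ω} ∩ ({ω | αL ≤ W ω} ∩ {ω | Y ω ≤ αU}) ⊆
        ⋃ k ∈ Finset.range (K + 1),
          {ω | r k ≤ Y ω ∧ W ω ≤ e * γ * r k} := by
      rintro ω ⟨h1, h2, h3⟩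
      simp only [Set.mem_setOf_eq] at h1 h2 h3
      have hgY : 0 < γ * Y ω := lt_of_lt_of_le hαL (h2.trans h1)
      have hY : 0 < Y ω := by
        rcases mul_pos_iff.1 hgY with ⟨_, h⟩ | ⟨h, _⟩
        · exact h
        · linarith
      have htpos : 0 < γ * Y ω / αL := by positivity
      have ht : (1:ℝ) ≤ γ * Y ω / αL := (one_le_div hαL).2 (h2.trans h1)
      set s := Real.log (γ * Y ω / αL) with hs
      have hs0 : 0 ≤ s := Real.log_nonneg ht
      have hsL : s ≤ L := by
        rw [hs, hL]
        apply Real.log_le_log htpos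
        gcongr
      refine Set.mem_biUnion (Finset.mem_range.2 (Nat.lt_succ_of_le (Nat.floor_mono hsL))) ?_
      constructor
      · -- r ⌊s⌋₊ ≤ Y ω
        have hexp : Real.exp ((⌊s⌋₊ : ℝ)) ≤ γ * Y ω / αL := by
          calc Real.exp ((⌊s⌋₊ : ℝ)) ≤ Real.exp s := Real.exp_le_exp.2 (Nat.floor_le hs0)
          _ = γ * Y ω / αL := Real.exp_log htpos
        have h4 : αL * Real.exp ((⌊s⌋₊ : ℝ)) ≤ γ * Y ω := by
          calc αL * Real.exp ((⌊s⌋₊ : ℝ)) ≤ αL * (γ * Y ω / αL) := by gcongr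
          _ = γ * Y ω := by field_simp
        show r ⌊s⌋₊ ≤ Y ω
        rw [hr]
        rw [div_le_iff₀ hγ]
        nlinarith
      · -- W ω ≤ e γ r ⌊s⌋₊
        have hlt : s < (⌊s⌋₊ : ℝ) + 1 := Nat.lt_floor_add_one s
        have hexp : γ * Y ω / αL ≤ Real.exp ((⌊s⌋₊ : ℝ) + 1) := by
          rw [← Real.exp_log htpos]
          exact Real.exp_le_exp.2 hlt.le
        have h4 : γ * Y ω ≤ αL * Real.exp ((⌊s⌋₊ : ℝ) + 1) := by
          calc γ * Y ω = αL * (γ * Y ω / αL) := by field_simp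
          _ ≤ αL * Real.exp ((⌊s⌋₊ : ℝ) + 1) := by gcongr
        have heq : e * γ * r ⌊s⌋₊ = αL * Real.exp ((⌊s⌋₊ : ℝ) + 1) := by
          rw [hr, Real.exp_add, he]
          field_simp
        show W ω ≤ e * γ * r ⌊s⌋₊
        rw [heq]
        linarith
    -- bound on each slice
    have hterm : ∀ k : ℕ, μ {ω | r k ≤ Y ω ∧ W ω ≤ e * γ * r k} ≤ ENNReal.ofReal C := by
      intro k
      have h1 := htail (r k) (e * γ * r k) (hrpos k) (by positivity)
      refine h1.trans (ENNReal.ofReal_le_ofReal (Real.exp_le_exp.2 ?_))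
      rw [hC] at *
      have hd1 : e * γ * r k + R * r k ≠ 0 := by positivity
      have hteq : (r k) ^ 2 / 2 / (e * γ * r k + R * r k) = r k / (2 * (e * γ + R)) := by
        have hne : r k ≠ 0 := (hrpos k).ne'
        field_simp
      rw [neg_div, hteq, neg_le_neg_iff]
      calc a = αL / (2 * e * γ * (e * γ + R)) := ha
      _ ≤ (γ * r k) / (2 * e * γ * (e * γ + R)) := by gcongr; exact hrge k
      _ = r k / (2 * e * (e * γ + R)) := by
          field_simp
      _ ≤ r k / (2 * (e * γ + R)) := by
          gcongr <;> nlinarith [he1, heγR, hrpos k]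
    -- combine
    have hKL : ((K + 1 : ℕ) : ℝ) ≤ L + 1 := by
      push_cast
      have := Nat.floor_le hL0
      rw [hK]
      linarith
    have hfin : (L + 1) * C = Real.exp (-a + Real.log (L + 1)) := by
      rw [Real.exp_add, hC, mul_comm]
      congr 1
      exact (Real.exp_log (by linarith)).symm
    calc μ ({ω | W ω ≤ γ * Y ω} ∩ ({ω | αL ≤ W ω} ∩ {ω | Y ω ≤ αU}))
        ≤ μ (⋃ k ∈ Finset.range (K + 1), {ω | r k ≤ Y ω ∧ W ω ≤ e * γ * r k}) :=
          measure_mono hsub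
      _ ≤ ∑ k ∈ Finset.range (K + 1), μ {ω | r k ≤ Y ω ∧ W ω ≤ e * γ * r k} :=
          measure_biUnion_finset_le _ _
      _ ≤ ∑ _k ∈ Finset.range (K + 1), ENNReal.ofReal C :=
          Finset.sum_le_sum (fun k _ => hterm k)
      _ = ((K + 1 : ℕ) : ENNReal) * ENNReal.ofReal C := by
          rw [Finset.sum_const, Finset.card_range, nsmul_eq_mul]
      _ ≤ ENNReal.ofReal (L + 1) * ENNReal.ofReal C := by
          gcongr
          rw [← ENNReal.ofReal_natCast]
          exact ENNReal.ofReal_le_ofReal hKL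
      _ = ENNReal.ofReal ((L + 1) * C) := by
          rw [ENNReal.ofReal_mul (by linarith)]
      _ = ENNReal.ofReal (Real.exp (-a + Real.log (L + 1))) := by rw [hfin]
  · -- degenerate case: the event is empty
    have hempty : {ω | W ω ≤ γ * Y ω} ∩ ({ω | αL ≤ W ω} ∩ {ω | Y ω ≤ αU}) = ∅ := by
      ext ω
      simp only [Set.mem_inter_iff, Set.mem_setOf_eq, Set.mem_empty_iff_false, iff_false,
        not_and]
      intro h1 h2 h3
      exact hcase (le_trans h2 (le_trans h1 (mul_le_mul_of_nonneg_left h3 hγ.le)))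
    rw [hempty]
    simp

end LongContext
end

section
/- Let d, p, N ≥ 1 be integers, 1 ≤ p' ≤ p, T > p, let A⋆ ∈ ℝ^{d×pd} and set L_⋆ := (I_{Td} − M_{A⋆})^{-1}. Let A₁, A₂ ∈ ℝ^{d×pd} each have zero blocks beyond position p', let A⋆_{p'} = (A⋆_1, …, A⋆_{p'}, 0, …, 0), and write Δ_{A_i} := M_{A_i} − M_{A⋆_{p'}}. Then for every matrix E ∈ ℝ^{Td×N}: ‖Δ_{A₂} L_⋆ E‖_F² ≥ (1/2) ‖Δ_{A₁} L_⋆ E‖_F² − p' ‖A₁ − A₂‖_op² ‖L_⋆‖_op² ‖E‖_F². -/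
open scoped BigOperators
open Matrix MeasureTheory

namespace LongContext

section Aux

lemma opNorm_nonneg' {m n : Type*} [Fintype m] [Fintype n] [DecidableEq n]
    (M : Matrix m n ℝ) : 0 ≤ opNorm M := norm_nonneg _

lemma mulVec_sq_le {m n : Type*} [Fintype m] [Fintype n] [DecidableEq n]
    (M : Matrix m n ℝ) (v : n → ℝ) :
    ∑ i, (M.mulVec v i)^2 ≤ (opNorm M)^2 * ∑ j, (v j)^2 := by
  set x : EuclideanSpace ℝ n := (WithLp.equiv 2 (∀ _ : n, ℝ)).symm v with hx
  have h1 : ‖Matrix.toEuclideanLin M x‖ ≤ opNorm M * ‖x‖ := by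
    have := (LinearMap.toContinuousLinearMap (Matrix.toEuclideanLin M)).le_opNorm x
    simpa [opNorm] using this
  have hy : Matrix.toEuclideanLin M x = (WithLp.equiv 2 (∀ _ : m, ℝ)).symm (M.mulVec v) := by
    rw [hx]; rfl
  have hnx : ‖x‖^2 = ∑ j, (v j)^2 := by
    rw [EuclideanSpace.norm_eq, Real.sq_sqrt (by positivity)]
    simp [hx, sq_abs]
  have hny : ‖Matrix.toEuclideanLin M x‖^2 = ∑ i, (M.mulVec v i)^2 := by
    rw [hy, EuclideanSpace.norm_eq, Real.sq_sqrt (by positivity)]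
    simp [sq_abs]
  calc ∑ i, (M.mulVec v i)^2 = ‖Matrix.toEuclideanLin M x‖^2 := hny.symm
    _ ≤ (opNorm M * ‖x‖)^2 := by
        apply pow_le_pow_left₀ (norm_nonneg _) h1
    _ = (opNorm M)^2 * ∑ j, (v j)^2 := by rw [mul_pow, hnx]

lemma frobSq_nonneg {m n : Type*} [Fintype m] [Fintype n] (M : Matrix m n ℝ) :
    0 ≤ frobSq M := by
  apply Finset.sum_nonneg; intro i _; apply Finset.sum_nonneg; intro j _; positivity

lemma frobSq_mul_le {m n N : Type*} [Fintype m] [Fintype n] [Fintype N] [DecidableEq n]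
    (L : Matrix m n ℝ) (E : Matrix n N ℝ) :
    frobSq (L * E) ≤ (opNorm L)^2 * frobSq E := by
  have h : ∀ (i : m) (c : N), (L * E) i c = L.mulVec (fun r => E r c) i := by
    intro i c; simp [Matrix.mul_apply, Matrix.mulVec, dotProduct]
  calc frobSq (L * E) = ∑ c : N, ∑ i : m, (L.mulVec (fun r => E r c) i)^2 := by
        rw [frobSq, Finset.sum_comm]
        exact Finset.sum_congr rfl fun c _ => Finset.sum_congr rfl fun i _ => by rw [h]
    _ ≤ ∑ c : N, (opNorm L)^2 * ∑ r, (E r c)^2 :=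
        Finset.sum_le_sum fun c _ => mulVec_sq_le L _
    _ = (opNorm L)^2 * frobSq E := by
        rw [← Finset.mul_sum, frobSq, Finset.sum_comm]

lemma frobSq_add_le {m n : Type*} [Fintype m] [Fintype n] (P Q : Matrix m n ℝ) :
    frobSq (P + Q) ≤ 2 * frobSq P + 2 * frobSq Q := by
  have : ∀ i j, (P i j + Q i j)^2 ≤ 2*(P i j)^2 + 2*(Q i j)^2 := by
    intro i j; nlinarith [sq_nonneg (P i j - Q i j)]
  calc frobSq (P + Q) = ∑ i, ∑ j, (P i j + Q i j)^2 := by simp [frobSq]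
    _ ≤ ∑ i, ∑ j, (2*(P i j)^2 + 2*(Q i j)^2) :=
        Finset.sum_le_sum fun i _ => Finset.sum_le_sum fun j _ => this i j
    _ = 2 * frobSq P + 2 * frobSq Q := by
        simp [frobSq, Finset.sum_add_distrib, Finset.mul_sum]

end Aux

lemma key_bound {d p T N : ℕ} (p' : ℕ) (hp'p : p' ≤ p)
    (B : Fin p → Matrix (Fin d) (Fin d) ℝ)
    (hB : ∀ k : Fin p, p' ≤ k.1 → B k = 0)
    (X : Matrix (Fin T × Fin d) (Fin N) ℝ) :
    frobSq (MA T B * X) ≤ (p' : ℝ) * (opNorm (blockRow B))^2 * frobSq X := by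
  set a := opNorm (blockRow B) with ha
  -- the truncated shifted vector fed into blockRow B
  set v : Fin N → Fin T → (Fin p × Fin d → ℝ) :=
    fun n t kb => if h : kb.1.1 < p' ∧ kb.1.1 + 1 ≤ t.1
      then X (⟨t.1 - kb.1.1 - 1, by omega⟩, kb.2) n else 0 with hv
  have claim : ∀ (n : Fin N) (t : Fin T) (i : Fin d),
      (MA T B * X) (t, i) n = (blockRow B).mulVec (v n t) i := by
    intro n t i
    rw [Matrix.mul_apply, Matrix.mulVec, dotProduct]
    rw [Fintype.sum_prod_type, Fintype.sum_prod_type]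
    rw [Finset.sum_comm]
    conv_rhs => rw [Finset.sum_comm]
    apply Finset.sum_congr rfl
    intro b _
    have lhs_eq : ∀ s : Fin T, MA T B (t, i) (s, b) * X (s, b) n =
        ∑ k : Fin p, (if s.1 + k.1 + 1 = t.1 then B k i b * X (s, b) n else 0) := by
      intro s
      by_cases hc : s.1 < t.1 ∧ t.1 - s.1 ≤ p
      · have hk : t.1 - s.1 - 1 < p := by omega
        rw [show MA T B (t, i) (s, b) = B ⟨t.1 - s.1 - 1, hk⟩ i b from by
          simp only [MA]; rw [dif_pos hc]]
        rw [Finset.sum_eq_single (⟨t.1 - s.1 - 1, hk⟩ : Fin p)]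
        · rw [if_pos (show _ by simp only [Fin.val_mk]; omega)]
        · intro k _ hne
          rw [if_neg]
          intro hcontra
          exact hne (Fin.ext (by simp only [Fin.val_mk]; omega))
        · intro h; exact absurd (Finset.mem_univ _) h
      · rw [show MA T B (t, i) (s, b) = 0 from by simp only [MA]; rw [dif_neg hc]]
        rw [zero_mul]
        symm
        apply Finset.sum_eq_zero
        intro k _
        rw [if_neg]
        intro hcontra
        exact hc ⟨by omega, by omega⟩
    have rhs_eq : ∀ k : Fin p, blockRow B i (k, b) * v n t (k, b) =
        ∑ s : Fin T, (if s.1 + k.1 + 1 = t.1 then B k i b * X (s, b) n else 0) := by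
      intro k
      by_cases hk' : k.1 < p'
      · by_cases hkt : k.1 + 1 ≤ t.1
        · have hs : t.1 - k.1 - 1 < T := by omega
          rw [show v n t (k, b) = X (⟨t.1 - k.1 - 1, hs⟩, b) n from by
            simp only [hv]; rw [dif_pos ⟨hk', hkt⟩]]
          rw [Finset.sum_eq_single (⟨t.1 - k.1 - 1, hs⟩ : Fin T)]
          · rw [if_pos (show _ by simp only [Fin.val_mk]; omega)]
            rfl
          · intro s _ hne
            rw [if_neg]
            intro hcontra
            exact hne (Fin.ext (by simp only [Fin.val_mk]; omega))
          · intro h; exact absurd (Finset.mem_univ _) h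
        · rw [show v n t (k, b) = 0 from by
            simp only [hv]; rw [dif_neg (by omega)]]
          rw [mul_zero]
          symm
          apply Finset.sum_eq_zero
          intro s _
          rw [if_neg]; omega
      · have hB0 : B k i b = 0 := by rw [hB k (by omega)]; rfl
        rw [show blockRow B i (k, b) = B k i b from rfl, hB0, zero_mul]
        symm
        apply Finset.sum_eq_zero
        intro s _
        simp [hB0]
    calc ∑ s : Fin T, MA T B (t, i) (s, b) * X (s, b) n
        = ∑ s : Fin T, ∑ k : Fin p, (if s.1 + k.1 + 1 = t.1 then B k i b * X (s, b) n else 0) :=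
          Finset.sum_congr rfl fun s _ => lhs_eq s
      _ = ∑ k : Fin p, ∑ s : Fin T, (if s.1 + k.1 + 1 = t.1 then B k i b * X (s, b) n else 0) :=
          Finset.sum_comm
      _ = ∑ k : Fin p, blockRow B i (k, b) * v n t (k, b) :=
          Finset.sum_congr rfl fun k _ => (rhs_eq k).symm
  -- now the counting bound
  have step2 : ∀ n : Fin N, ∑ t : Fin T, ∑ kb : Fin p × Fin d, (v n t kb)^2 ≤
      (p' : ℝ) * ∑ sb : Fin T × Fin d, (X sb n)^2 := by
    intro n
    set f : Fin T → ℝ := fun s => ∑ b : Fin d, (X (s, b) n)^2 with hf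
    have hf0 : ∀ s, 0 ≤ f s := by intro s; apply Finset.sum_nonneg; intros; positivity
    have e1 : ∀ t : Fin T, ∑ kb : Fin p × Fin d, (v n t kb)^2 =
        ∑ k : Fin p, (if k.1 < p' ∧ k.1 + 1 ≤ t.1 then f ⟨t.1 - k.1 - 1, by omega⟩ else 0) := by
      intro t
      rw [Fintype.sum_prod_type]
      apply Finset.sum_congr rfl
      intro k _
      by_cases hc : k.1 < p' ∧ k.1 + 1 ≤ t.1
      · rw [if_pos hc]
        apply Finset.sum_congr rfl
        intro b _
        simp only [hv]; rw [dif_pos hc]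
      · rw [if_neg hc]
        apply Finset.sum_eq_zero
        intro b _
        simp only [hv]; rw [dif_neg hc]; ring
    have e2 : ∀ k : Fin p, k.1 < p' →
        ∑ t : Fin T, (if k.1 < p' ∧ k.1 + 1 ≤ t.1 then f ⟨t.1 - k.1 - 1, by omega⟩ else 0)
          ≤ ∑ s : Fin T, f s := by
      intro k hk
      have : ∀ t : Fin T, (if k.1 < p' ∧ k.1 + 1 ≤ t.1 then f ⟨t.1 - k.1 - 1, by omega⟩ else 0)
          = (if k.1 + 1 ≤ t.1 then f ⟨t.1 - k.1 - 1, by omega⟩ else 0) := by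
        intro t; by_cases h : k.1 + 1 ≤ t.1
        · rw [if_pos h, if_pos ⟨hk, h⟩]
        · rw [if_neg h, if_neg (by omega)]
      rw [Finset.sum_congr rfl fun t _ => this t]
      rw [← Finset.sum_filter]
      set S := Finset.univ.filter (fun t : Fin T => k.1 + 1 ≤ t.1) with hS
      set φ : Fin T → Fin T := fun t => ⟨t.1 - k.1 - 1, by omega⟩ with hφ
      have hinj : Set.InjOn φ S := by
        intro t1 h1 t2 h2 he
        simp only [hS, Finset.coe_filter, Set.mem_setOf_eq, Finset.mem_univ, true_and] at h1 h2
        have : t1.1 - k.1 - 1 = t2.1 - k.1 - 1 := congrArg Fin.val he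
        exact Fin.ext (by omega)
      calc ∑ t ∈ S, f (φ t) = ∑ s ∈ S.image φ, f s := (Finset.sum_image
            (fun t h1 t2 h2 he => hinj h1 h2 he)).symm
        _ ≤ ∑ s : Fin T, f s :=
            Finset.sum_le_sum_of_subset_of_nonneg (Finset.subset_univ _)
              (fun s _ _ => hf0 s)
    calc ∑ t : Fin T, ∑ kb : Fin p × Fin d, (v n t kb)^2
        = ∑ t : Fin T, ∑ k : Fin p,
            (if k.1 < p' ∧ k.1 + 1 ≤ t.1 then f ⟨t.1 - k.1 - 1, by omega⟩ else 0) :=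
          Finset.sum_congr rfl fun t _ => e1 t
      _ = ∑ k : Fin p, ∑ t : Fin T,
            (if k.1 < p' ∧ k.1 + 1 ≤ t.1 then f ⟨t.1 - k.1 - 1, by omega⟩ else 0) :=
          Finset.sum_comm
      _ ≤ ∑ k : Fin p, (if k.1 < p' then ∑ s : Fin T, f s else 0) := by
          apply Finset.sum_le_sum
          intro k _
          by_cases hk : k.1 < p'
          · rw [if_pos hk]; exact e2 k hk
          · rw [if_neg hk]
            apply le_of_eq
            apply Finset.sum_eq_zero
            intro t _
            rw [if_neg (by omega)]
      _ = (p' : ℝ) * ∑ s : Fin T, f s := by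
          rw [Fin.sum_univ_eq_sum_range (fun j => if j < p' then ∑ s : Fin T, f s else 0) p]
          rw [← Finset.sum_filter]
          have : (Finset.range p).filter (fun j => j < p') = Finset.range p' := by
            ext j; simp; omega
          rw [this, Finset.sum_const, Finset.card_range, nsmul_eq_mul]
      _ = (p' : ℝ) * ∑ sb : Fin T × Fin d, (X sb n)^2 := by
          rw [Fintype.sum_prod_type]
  -- assemble
  have ha0 : (0:ℝ) ≤ a := opNorm_nonneg' _
  calc frobSq (MA T B * X)
      = ∑ n : Fin N, ∑ ti : Fin T × Fin d, ((MA T B * X) ti n)^2 := by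
        rw [frobSq, Finset.sum_comm]
    _ = ∑ n : Fin N, ∑ t : Fin T, ∑ i : Fin d, ((MA T B * X) (t, i) n)^2 := by
        apply Finset.sum_congr rfl; intro n _; rw [Fintype.sum_prod_type]
    _ ≤ ∑ n : Fin N, ∑ t : Fin T, a^2 * ∑ kb : Fin p × Fin d, (v n t kb)^2 := by
        apply Finset.sum_le_sum; intro n _
        apply Finset.sum_le_sum; intro t _
        calc ∑ i : Fin d, ((MA T B * X) (t, i) n)^2
            = ∑ i, ((blockRow B).mulVec (v n t) i)^2 :=
              Finset.sum_congr rfl fun i _ => by rw [claim n t i]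
          _ ≤ a^2 * ∑ kb, (v n t kb)^2 := mulVec_sq_le _ _
    _ ≤ ∑ n : Fin N, a^2 * ((p' : ℝ) * ∑ sb : Fin T × Fin d, (X sb n)^2) := by
        apply Finset.sum_le_sum; intro n _
        rw [← Finset.mul_sum]
        exact mul_le_mul_of_nonneg_left (step2 n) (by positivity)
    _ = (p' : ℝ) * a^2 * frobSq X := by
        rw [frobSq, Finset.sum_comm, Finset.mul_sum]
        apply Finset.sum_congr rfl; intro n _; ring


/-- Lemma 15 (discretization, lower bound). For `A₁, A₂` supported on the
first `p'` blocks and `Δ_{A_i} = M_{A_i} − M_{A⋆_{p'}}`: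
`‖Δ_{A₂} L⋆ E‖_F² ≥ (1/2)‖Δ_{A₁} L⋆ E‖_F² − p'·‖A₁−A₂‖_op²·‖L⋆‖_op²·‖E‖_F²`. -/
theorem discretization_lower (d p p' N T : ℕ) (hd : 1 ≤ d) (hp : 1 ≤ p)
    (hN : 1 ≤ N) (hp'1 : 1 ≤ p') (hp'p : p' ≤ p) (hT : p < T)
    (Astar : Fin p → Matrix (Fin d) (Fin d) ℝ)
    (A₁ A₂ : Fin p → Matrix (Fin d) (Fin d) ℝ)
    (hA₁ : ∀ k : Fin p, p' ≤ k.1 → A₁ k = 0)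
    (hA₂ : ∀ k : Fin p, p' ≤ k.1 → A₂ k = 0)
    (E : Matrix (Fin T × Fin d) (Fin N) ℝ) :
    (1 / 2) * frobSq ((MA T A₁ - MA T (trunc p' Astar)) * (1 - MA T Astar)⁻¹ * E) -
        (p' : ℝ) * (opNorm (blockRow A₁ - blockRow A₂)) ^ 2 *
          (opNorm ((1 - MA T Astar)⁻¹)) ^ 2 * frobSq E ≤
      frobSq ((MA T A₂ - MA T (trunc p' Astar)) * (1 - MA T Astar)⁻¹ * E) := by
  set L := (1 - MA T Astar)⁻¹ with hL
  set a := opNorm (blockRow A₁ - blockRow A₂) with ha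
  set b := opNorm L with hb
  set Δ₁ := MA T A₁ - MA T (trunc p' Astar) with hΔ₁
  set Δ₂ := MA T A₂ - MA T (trunc p' Astar) with hΔ₂
  set D := MA T (fun k => A₁ k - A₂ k) with hD
  have hMAsub : MA T A₁ - MA T A₂ = D := by
    rw [hD]
    ext ia jb
    simp only [Matrix.sub_apply, MA]
    split
    · simp [Matrix.sub_apply]
    · simp
  have hsplit : Δ₁ = Δ₂ + D := by
    rw [hΔ₁, hΔ₂, ← hMAsub]; abel
  have hBR : blockRow A₁ - blockRow A₂ = blockRow (fun k => A₁ k - A₂ k) := by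
    ext i kj; simp [blockRow, Matrix.sub_apply]
  have hBz : ∀ k : Fin p, p' ≤ k.1 → A₁ k - A₂ k = 0 := fun k h => by
    rw [hA₁ k h, hA₂ k h, sub_zero]
  set X := L * E with hX
  have hkey : frobSq (D * X) ≤ (p' : ℝ) * a ^ 2 * frobSq X := by
    rw [ha, hBR, hD]; exact key_bound p' hp'p _ hBz X
  have hXE : frobSq X ≤ b ^ 2 * frobSq E := frobSq_mul_le L E
  have hadd : frobSq (Δ₁ * X) ≤ 2 * frobSq (Δ₂ * X) + 2 * frobSq (D * X) := by
    rw [hsplit, Matrix.add_mul]; exact frobSq_add_le _ _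
  have ha1 : Δ₁ * L * E = Δ₁ * X := by rw [hX, Matrix.mul_assoc]
  have ha2 : Δ₂ * L * E = Δ₂ * X := by rw [hX, Matrix.mul_assoc]
  rw [ha1, ha2]
  have hc : (0:ℝ) ≤ (p' : ℝ) * a ^ 2 := by positivity
  have h3 : frobSq (D * X) ≤ (p' : ℝ) * a ^ 2 * (b ^ 2 * frobSq E) :=
    le_trans hkey (mul_le_mul_of_nonneg_left hXE hc)
  have h4 : (p' : ℝ) * a ^ 2 * (b ^ 2 * frobSq E) = (p' : ℝ) * a ^ 2 * b ^ 2 * frobSq E := by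
    ring
  linarith


end LongContext
end
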